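/- Let (W,S) be a Coxeter system with based root system (Φ,Δ) in (V,B), X ⊆ ℝ₊, and define d_X(±β) = ±|{α ∈ N(s_β) : B(α,β) ∈ X}| for β ∈ Φ⁺. Then for any simple root α ∈ Δ and any β ∈ Φ: d_X(s_α(β)) = d_X(β) − 2 if B(α,β) ∈ X, d_X(s_α(β)) = d_X(β) if B(α,β) ∉ X ∪ (−X), and d_X(s_α(β)) = d_X(β) + 2 if B(α,β) ∈ −X. -/

import Mathlib

/-!
Every root is positive or negative: by induction on length, if `ℓ(w s_i) > ℓ(w)` then `w α_i`
is a nonnegative combination of simple roots, the rank-two step being the Chebyshev computation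
in the dihedral group `⟨s_i, s_j⟩`. Hence `s_i` permutes `Φ⁺ \ {α_i}`.

For `β ∈ Φ⁺ \ {α_i}`, conjugation by `s_i` carries `N(s_β)` onto `N(s_{s_i β})` and preserves the
pairing with `β`, except at the roots `α_i, ±s_β α_i`; these contribute exactly `2` to `d_X(β)`
when `B(α_i, β) ∈ X` and nothing otherwise. So
`d_X(s_i β) + 2[B(α_i, β) ∈ X] = d_X(β) + 2[-B(α_i, β) ∈ X]`, which extends to negative roots
because `d_X` is odd, and the three cases follow since `X` and `-X` are disjoint.
-/

open scoped Classical

noncomputable section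

namespace CoxGar

variable {I : Type*} {W : Type*} [Group W] {M : CoxeterMatrix I}
variable {V : Type*} [AddCommGroup V] [Module ℝ V]

/-- The conic (nonnegative) hull of a set of vectors. -/
def posSpan (A : Set V) : Set V :=
  {v | ∃ (s : Finset V) (c : V → ℝ), ↑s ⊆ A ∧ (∀ x ∈ s, 0 ≤ c x) ∧ v = ∑ x ∈ s, c x • x}

/-- `l` is a reduced word. -/
def IsRed (cs : CoxeterSystem M W) (l : List I) : Prop :=
  cs.length (cs.wordProd l) = l.length

/-- Right weak order: `u` is a prefix of `v`, i.e. some reduced word for `u` is a prefix of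
some reduced word for `v`. -/
def leR (cs : CoxeterSystem M W) (u v : W) : Prop :=
  ∃ l₁ l₂ : List I, IsRed cs (l₁ ++ l₂) ∧ cs.wordProd (l₁ ++ l₂) = v ∧ cs.wordProd l₁ = u

/-- `u` is a suffix of `v`: some reduced word for `u` is a suffix of some reduced word for `v`. -/
def IsSuffixOf (cs : CoxeterSystem M W) (u v : W) : Prop :=
  ∃ l₁ l₂ : List I, IsRed cs (l₁ ++ l₂) ∧ cs.wordProd (l₁ ++ l₂) = v ∧ cs.wordProd l₂ = u

/-- `j` is the join (least upper bound) of `X` in right weak order. -/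
def IsJoin (cs : CoxeterSystem M W) (X : Set W) (j : W) : Prop :=
  (∀ x ∈ X, leR cs x j) ∧ ∀ g, (∀ x ∈ X, leR cs x g) → leR cs j g

/-- A Garside shadow in the Coxeter system `(W,S)`: a subset of `W` containing all simple
reflections, closed under existing joins in right weak order and under taking suffixes. -/
structure IsGarsideShadow (cs : CoxeterSystem M W) (A : Set W) : Prop where
  simple_mem : ∀ i : I, cs.simple i ∈ A
  join_mem : ∀ X ⊆ A, ∀ j : W, IsJoin cs X j → j ∈ A
  suffix_mem : ∀ w ∈ A, ∀ u : W, IsSuffixOf cs u w → u ∈ A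

/-- Word length with respect to an arbitrary generating set of a group. -/
def genLen (Sgen : Set W) (w : W) : ℕ :=
  sInf {n | ∃ l : List W, l.length = n ∧ (∀ x ∈ l, x ∈ Sgen) ∧ l.prod = w}

/-- A geometric representation of the Coxeter system `cs` on the quadratic space `(V,B)`:
a faithful representation sending the simple reflections to the `B`-reflections in a
simple system `α` (positively independent unit roots with the prescribed pairings). -/
structure GeomRep (cs : CoxeterSystem M W) (V : Type*) [AddCommGroup V] [Module ℝ V] where
  B : V →ₗ[ℝ] V →ₗ[ℝ] ℝ
  symm : ∀ u v : V, B u v = B v u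
  α : I → V
  norm_one : ∀ i, B (α i) (α i) = 1
  pairing_finite : ∀ i j, M i j ≠ 0 → B (α i) (α j) = - Real.cos (Real.pi / (M i j : ℝ))
  pairing_infinite : ∀ i j, M i j = 0 → B (α i) (α j) ≤ -1
  posIndep : ∀ f : I →₀ ℝ, (∀ i, 0 ≤ f i) → (f.sum fun i c => c • α i) = 0 → f = 0
  ρ : Representation ℝ W V
  faithful : Function.Injective ρ
  ρ_simple : ∀ (i : I) (v : V), ρ (cs.simple i) v = v - (2 * B (α i) v) • α i
  ρ_isom : ∀ (w : W) (u v : V), B (ρ w u) (ρ w v) = B u v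

namespace GeomRep

variable {cs : CoxeterSystem M W} (gr : GeomRep cs V)

/-- The root system `Φ`: the orbit of the simple roots. -/
def roots : Set V := {v | ∃ (w : W) (i : I), v = gr.ρ w (gr.α i)}

/-- The positive roots `Φ⁺`. -/
def posRoots : Set V := gr.roots ∩ posSpan (Set.range gr.α)

/-- The left inversion set `N(w) = Φ⁺ ∩ w(Φ⁻)`. -/
def invSet (w : W) : Set V := {v | v ∈ gr.posRoots ∧ gr.ρ w⁻¹ v ∈ -gr.posRoots}

/-- The reflection `s_β ∈ W` associated to a root `β` (the element of `W` acting on `V` as the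
`B`-reflection along `β`). -/
def rfl' (b : V) : W :=
  Classical.epsilon fun t => ∀ v : V, gr.ρ t v = v - (2 * gr.B b v) • b

/-- Dominance order: `a ⪯ b` iff every inversion set containing `b` contains `a`. -/
def dominates (a b : V) : Prop := ∀ w : W, b ∈ gr.invSet w → a ∈ gr.invSet w

/-- The set of positive roots strictly dominated by `b`. -/
def domSet (b : V) : Set V := {a | a ∈ gr.posRoots ∧ gr.dominates a b ∧ a ≠ b}

/-- The dominance depth (`∞`-depth) of a root. -/
def dpInf (b : V) : ℕ := (gr.domSet b).ncard

/-- The set `Σ_n` of `n`-small roots. -/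
def smallRoots (n : ℕ) : Set V := {b | b ∈ gr.posRoots ∧ gr.dpInf b ≤ n}

/-- `w` is `n`-low: its inversion set is the set of roots in the conic hull of its
`n`-small inversion set. -/
def IsLow (n : ℕ) (w : W) : Prop :=
  gr.invSet w = posSpan (gr.invSet w ∩ gr.smallRoots n) ∩ gr.roots

/-- The set `L_n(W)` of `n`-low elements. -/
def lowSet (n : ℕ) : Set W := {w | gr.IsLow n w}

/-- The base `N¹(w)` of the inversion set: positive roots `β` with `ℓ(s_β w) = ℓ(w) - 1`. -/
def base (w : W) : Set V :=
  {b | b ∈ gr.posRoots ∧ cs.length (gr.rfl' b * w) + 1 = cs.length w}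

/-- The roots of a reflection subgroup `W'`. -/
def rootsOf (W' : Subgroup W) : Set V := {b | b ∈ gr.roots ∧ gr.rfl' b ∈ W'}

/-- The canonical simple system of a reflection subgroup `W'`. -/
def canSimples (W' : Subgroup W) : Set V :=
  {a | a ∈ gr.posRoots ∧ gr.invSet (gr.rfl' a) ∩ gr.rootsOf W' = {a}}

/-- `{a,b}` is the canonical simple pair of a maximal dihedral reflection subgroup:
both are positive roots and the positive roots in the plane they span are exactly the
roots in their conic hull. -/
def IsMaxDihedralPair (a b : V) : Prop :=
  a ∈ gr.posRoots ∧ b ∈ gr.posRoots ∧ a ≠ b ∧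
    (Submodule.span ℝ {a, b} : Set V) ∩ gr.posRoots = posSpan {a, b} ∩ gr.roots

/-- A set of positive roots is bipodal if, whenever it contains a positive non-simple root of a
maximal dihedral reflection subgroup, it contains both canonical simple roots of that subgroup. -/
def Bipodal (A : Set V) : Prop :=
  ∀ a b : V, gr.IsMaxDihedralPair a b →
    (∃ c ∈ A, c ∈ posSpan {a, b} ∩ gr.roots ∧ c ≠ a ∧ c ≠ b) → a ∈ A ∧ b ∈ A

/-- `f_s(β)`: the root completing `α_s` to the canonical simple pair of the maximal dihedral
reflection subgroup containing `s` and `s_β`. -/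
def fRoot (i : I) (b : V) : V :=
  Classical.epsilon fun c => c ∈ gr.posRoots ∧
    (Submodule.span ℝ {gr.α i, b} : Set V) ∩ gr.posRoots = posSpan {gr.α i, c} ∩ gr.roots

/-- The `X`-length of a positive root. -/
def dXpos (X : Set ℝ) (b : V) : ℕ :=
  {a | a ∈ gr.invSet (gr.rfl' b) ∧ gr.B a b ∈ X}.ncard

/-- The `X`-length function `d_X` on the root system, with `d_X(-β) = -d_X(β)`. -/
def dX (X : Set ℝ) (b : V) : ℤ :=
  if b ∈ gr.posRoots then (gr.dXpos X b : ℤ) else -(gr.dXpos X (-b) : ℤ)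

/-- Normalization of a vector to square length one. -/
def nzd (v : V) : V := (Real.sqrt (gr.B v v))⁻¹ • v

/-- A root `a` spans an extreme ray of the cone `C`. -/
def IsExtremeRayRep (C : Set V) (a : V) : Prop :=
  a ∈ C ∧ a ≠ 0 ∧ ∀ u ∈ C, ∀ v ∈ C, a ∈ posSpan {u, v} →
    (∃ c : ℝ, 0 < c ∧ u = c • a) ∨ (∃ c : ℝ, 0 < c ∧ v = c • a)

end GeomRep

variable {cs : CoxeterSystem M W}

theorem posSpan_eq_hull (A : Set V) : posSpan A = PointedCone.hull ℝ A := by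
  refine Set.Subset.antisymm ?_ fun v hv => ?_
  · rintro v ⟨s, c, hs, hc, rfl⟩
    exact Submodule.sum_mem _ fun x hx =>
      PointedCone.smul_mem _ (hc x hx) (PointedCone.subset_hull (hs hx))
  · obtain ⟨c, hsupp, hc, rfl⟩ := PointedCone.mem_hull_set.1 hv
    exact ⟨c.support, c, hsupp, fun x _ => hc x, rfl⟩

theorem two_le_coxeterMatrix {i j : I} (hij : i ≠ j) (h : M i j ≠ 0) : 2 ≤ M i j := by
  have := M.off_diagonal i j hij
  omega

section Combinatorics

open CoxeterSystem

variable (cs)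

theorem exists_eq_mul_wordProd_forall_not_isRightDescent (J : Set I) (w : W) :
    ∃ (u : W) (l : List I), (∀ x ∈ l, x ∈ J) ∧ w = u * cs.wordProd l ∧
      cs.length w = cs.length u + l.length ∧ ∀ k ∈ J, ¬cs.IsRightDescent u k := by
  induction hn : cs.length w using Nat.strong_induction_on generalizing w with
  | _ n ih =>
    by_cases h : ∃ k ∈ J, cs.IsRightDescent w k
    · obtain ⟨k, hk, hdesc⟩ := h
      obtain ⟨u, l, hl, hw, hlen, hu⟩ := ih _ (hn ▸ hdesc) (w * cs.simple k) rfl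
      refine ⟨u, l ++ [k], fun x hx => ?_, ?_, ?_, hu⟩
      · rcases List.mem_append.1 hx with hx | hx
        · exact hl x hx
        · rwa [List.mem_singleton.1 hx]
      · rw [cs.wordProd_append, cs.wordProd_singleton, ← mul_assoc, ← hw,
          cs.simple_mul_simple_cancel_right]
      · have := cs.isRightDescent_iff.1 hdesc
        rw [List.length_append, List.length_singleton]
        omega
    · push Not at h
      exact ⟨w, [], by simp, by simp, by simp [hn], h⟩

theorem not_isReduced_append_pair (l : List I) (x : I) : ¬cs.IsReduced (l ++ [x] ++ [x]) := by
  intro h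
  have := cs.length_wordProd_le l
  rw [CoxeterSystem.IsReduced, cs.wordProd_append, cs.wordProd_append, cs.wordProd_singleton,
    cs.simple_mul_simple_cancel_right] at h
  simp only [List.length_append, List.length_singleton] at h
  omega

variable {cs}

theorem eq_alternatingWord_of_isReduced {i j : I} (hij : i ≠ j) {l : List I}
    (hl : ∀ x ∈ l, x = i ∨ x = j) (hred : cs.IsReduced (l ++ [i])) :
    l = alternatingWord i j l.length := by
  induction l using List.reverseRecOn generalizing i j with
  | nil => rfl
  | append_singleton l x ih =>
    have hx : x = j := by
      refine (hl x (by simp)).resolve_left ?_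
      rintro rfl
      exact not_isReduced_append_pair cs l x hred
    subst hx
    have hred' : cs.IsReduced (l ++ [x]) := by
      simpa only [List.take_left] using hred.take (l ++ [x]).length
    have := ih hij.symm (fun y hy => (hl y (by simp [hy])).symm) hred'
    rw [List.length_append, List.length_singleton, alternatingWord_succ, ← this,
      List.concat_eq_append]

theorem exists_eq_mul_alternatingWord {w : W} {i j : I} (hi : ¬cs.IsRightDescent w i)
    (hj : cs.IsRightDescent w j) :
    ∃ (u : W) (p : ℕ), w = u * cs.wordProd (alternatingWord i j p) ∧
      cs.length u < cs.length w ∧ ¬cs.IsRightDescent u i ∧ ¬cs.IsRightDescent u j ∧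
      cs.IsReduced (alternatingWord j i (p + 1)) := by
  have hij : i ≠ j := by
    rintro rfl
    exact hi hj
  obtain ⟨u, l, hl, rfl, hlen, hu⟩ := exists_eq_mul_wordProd_forall_not_isRightDescent cs {i, j} w
  have hl0 : l ≠ [] := by
    rintro rfl
    rw [cs.wordProd_nil, mul_one] at hj
    exact hu j (by simp) hj
  have hred : cs.IsReduced (l ++ [i]) := by
    have h1 := cs.not_isRightDescent_iff.1 hi
    rw [mul_assoc, ← cs.wordProd_singleton i, ← cs.wordProd_append] at h1
    have h2 := cs.length_mul_le u (cs.wordProd (l ++ [i]))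
    have h3 := cs.length_wordProd_le (l ++ [i])
    rw [CoxeterSystem.IsReduced]
    simp only [List.length_append, List.length_singleton] at h3 ⊢
    omega
  have hl' := eq_alternatingWord_of_isReduced hij hl hred
  refine ⟨u, l.length, by rw [← hl'], ?_, hu i (by simp), hu j (by simp), ?_⟩
  · have := List.length_pos_iff.2 hl0
    omega
  · rwa [alternatingWord_succ, ← hl', List.concat_eq_append]

end Combinatorics

section Chebyshev

open Polynomial Chebyshev

theorem chebyshevU_eval_cos_nonneg {m : ℕ} (hm : 2 ≤ m) {n : ℤ} (hn : -1 ≤ n) (hnm : n < m) :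
    0 ≤ (U ℝ n).eval (Real.cos (Real.pi / m)) := by
  have hm' : (2 : ℝ) ≤ m := by exact_mod_cast hm
  have hsin : 0 < Real.sin (Real.pi / m) := Real.sin_pos_of_pos_of_lt_pi (by positivity) (by
    rw [div_lt_iff₀ (by linarith)]
    nlinarith [Real.pi_pos])
  refine nonneg_of_mul_nonneg_left ?_ hsin
  rw [U_real_cos]
  have hn0 : (0 : ℝ) ≤ n + 1 := by exact_mod_cast (by omega : (0 : ℤ) ≤ n + 1)
  have hnm' : (n : ℝ) + 1 ≤ m := by exact_mod_cast (by omega : n + 1 ≤ (m : ℤ))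
  apply Real.sin_nonneg_of_nonneg_of_le_pi (by positivity)
  calc (n + 1 : ℝ) * (Real.pi / m) ≤ m * (Real.pi / m) := by gcongr
    _ = Real.pi := by field_simp

theorem chebyshevU_eval_nonneg_of_one_le {c : ℝ} (hc : 1 ≤ c) {n : ℤ} (hn : -1 ≤ n) :
    0 ≤ (U ℝ n).eval c := by
  have hn0 : (0 : ℝ) ≤ n + 1 := by exact_mod_cast (by omega : (0 : ℤ) ≤ n + 1)
  rcases hc.eq_or_lt with rfl | hc
  · rwa [U_eval_one]
  rw [← Real.cosh_arcosh hc.le]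
  refine nonneg_of_mul_nonneg_left ?_ (Real.sinh_pos_iff.2 (Real.arcosh_pos hc))
  rw [U_real_cosh]
  exact Real.sinh_nonneg_iff.2 (mul_nonneg hn0 (Real.arcosh_nonneg hc.le))

end Chebyshev

namespace GeomRep

variable (gr : GeomRep cs V)

def posCone : PointedCone ℝ V := PointedCone.hull ℝ (Set.range gr.α)

theorem mem_posRoots_iff {b : V} : b ∈ gr.posRoots ↔ b ∈ gr.roots ∧ b ∈ gr.posCone := by
  rw [posRoots, posSpan_eq_hull]
  rfl

theorem alpha_mem_posCone (i : I) : gr.α i ∈ gr.posCone :=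
  PointedCone.subset_hull ⟨i, rfl⟩

theorem linearCombination_mem_posCone {f : I →₀ ℝ} (hf : ∀ i, 0 ≤ f i) :
    Finsupp.linearCombination ℝ gr.α f ∈ gr.posCone := by
  rw [Finsupp.linearCombination_apply]
  exact Submodule.sum_mem _ fun i _ => PointedCone.smul_mem _ (hf i) (gr.alpha_mem_posCone i)

theorem exists_linearCombination_eq_of_mem_posCone {v : V} (hv : v ∈ gr.posCone) :
    ∃ f : I →₀ ℝ, (∀ i, 0 ≤ f i) ∧ Finsupp.linearCombination ℝ gr.α f = v := by
  obtain ⟨c, rfl⟩ := Finsupp.mem_span_range_iff_exists_finsupp.1 hv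
  refine ⟨c.mapRange Subtype.val rfl, fun i => (c i).2, ?_⟩
  rw [Finsupp.linearCombination_apply, Finsupp.sum_mapRange_index (by simp)]
  rfl

theorem pairing_nonpos {i j : I} (hij : i ≠ j) : gr.B (gr.α i) (gr.α j) ≤ 0 := by
  by_cases h : M i j = 0
  · linarith [gr.pairing_infinite i j h]
  rw [gr.pairing_finite i j h, neg_nonpos]
  have hM : (2 : ℝ) ≤ M i j := by exact_mod_cast two_le_coxeterMatrix hij h
  apply Real.cos_nonneg_of_mem_Icc
  constructor
  · linarith [show 0 ≤ Real.pi / M i j by positivity, Real.pi_pos]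
  · rw [div_le_div_iff₀ (by linarith) (by norm_num)]
    nlinarith [Real.pi_pos]

theorem eq_zero_of_mem_posCone_of_neg_mem {v : V} (hv : v ∈ gr.posCone) (hnv : -v ∈ gr.posCone) :
    v = 0 := by
  obtain ⟨f, hf, rfl⟩ := gr.exists_linearCombination_eq_of_mem_posCone hv
  obtain ⟨g, hg, hgv⟩ := gr.exists_linearCombination_eq_of_mem_posCone hnv
  have hfg : f + g = 0 := gr.posIndep _ (fun i => add_nonneg (hf i) (hg i)) (by
    rw [← Finsupp.linearCombination_apply, map_add, hgv, add_neg_cancel])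
  have hf0 : f = 0 := Finsupp.ext fun i => by
    have := DFunLike.congr_fun hfg i
    rw [Finsupp.add_apply, Finsupp.zero_apply] at this
    rw [Finsupp.zero_apply]
    linarith [hf i, hg i]
  rw [hf0, map_zero]

theorem pairing_linearCombination_erase_nonpos (i : I) {f : I →₀ ℝ} (hf : ∀ j, 0 ≤ f j) :
    gr.B (gr.α i) (Finsupp.linearCombination ℝ gr.α (f.erase i)) ≤ 0 := by
  rw [Finsupp.linearCombination_apply, map_finsuppSum]
  refine Finset.sum_nonpos fun j hj => ?_
  have hji : j ≠ i := by
    rintro rfl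
    exact Finsupp.mem_support_iff.1 hj (Finsupp.erase_same ..)
  dsimp only
  rw [map_smul, smul_eq_mul, Finsupp.erase_ne hji]
  exact mul_nonpos_of_nonneg_of_nonpos (hf j) (gr.pairing_nonpos hji.symm)

/-- The ray through a simple root is a face of the positive cone: pairing with `α i` shows that
the components off `α i` add up to a nonpositive multiple of `α i`, which salience rules out. -/
theorem exists_eq_smul_alpha_of_add_eq {i : I} {u v : V} (hu : u ∈ gr.posCone)
    (hv : v ∈ gr.posCone) {r : ℝ} (huv : u + v = r • gr.α i) :
    ∃ k : ℝ, 0 ≤ k ∧ u = k • gr.α i := by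
  set L := Finsupp.linearCombination ℝ gr.α
  have hsplit : ∀ h : I →₀ ℝ, L h = L (h.erase i) + h i • gr.α i := fun h => by
    conv_lhs => rw [← Finsupp.single_add_erase i h]
    rw [map_add, Finsupp.linearCombination_single, add_comm]
  have herase : ∀ h : I →₀ ℝ, (∀ j, 0 ≤ h j) → L (h.erase i) ∈ gr.posCone := fun h hh =>
    gr.linearCombination_mem_posCone fun j => by
      rw [Finsupp.erase_apply]; split_ifs <;> simp [hh j]
  obtain ⟨f, hf, rfl⟩ := gr.exists_linearCombination_eq_of_mem_posCone hu
  obtain ⟨g, hg, rfl⟩ := gr.exists_linearCombination_eq_of_mem_posCone hv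
  set x := L (f.erase i) + L (g.erase i)
  have hx : x = (r - f i - g i) • gr.α i := by
    rw [hsplit f, hsplit g] at huv
    linear_combination (norm := module) huv
  have hcoef : r - f i - g i ≤ 0 := by
    have hB : gr.B (gr.α i) x ≤ 0 := by
      rw [map_add]
      linarith [gr.pairing_linearCombination_erase_nonpos i hf,
        gr.pairing_linearCombination_erase_nonpos i hg]
    rwa [hx, map_smul, gr.norm_one, smul_eq_mul, mul_one] at hB
  have hx0 : x = 0 := gr.eq_zero_of_mem_posCone_of_neg_mem (add_mem (herase f hf) (herase g hg))
    (by rw [hx, ← neg_smul]; exact PointedCone.smul_mem _ (by linarith) (gr.alpha_mem_posCone i))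
  have hf0 : L (f.erase i) = 0 := gr.eq_zero_of_mem_posCone_of_neg_mem (herase f hf)
    (by rw [neg_eq_of_add_eq_zero_right hx0]; exact herase g hg)
  exact ⟨f i, hf i, by rw [hsplit f, hf0, zero_add]⟩

theorem rho_mul_apply (w w' : W) (v : V) : gr.ρ (w * w') v = gr.ρ w (gr.ρ w' v) := by
  rw [map_mul]
  rfl

theorem simple_apply_simple_apply (i : I) (v : V) :
    gr.ρ (cs.simple i) (gr.ρ (cs.simple i) v) = v := by
  rw [← rho_mul_apply, cs.simple_mul_simple_self, map_one]
  rfl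

theorem simple_apply_alpha (i : I) : gr.ρ (cs.simple i) (gr.α i) = -gr.α i := by
  rw [gr.ρ_simple, gr.norm_one]
  module

theorem B_alpha_simple_apply (i : I) (b : V) :
    gr.B (gr.α i) (gr.ρ (cs.simple i) b) = -gr.B (gr.α i) b := by
  rw [gr.ρ_simple, map_sub, map_smul, gr.norm_one, smul_eq_mul]
  ring

theorem alpha_mem_roots (i : I) : gr.α i ∈ gr.roots :=
  ⟨1, i, by rw [map_one]; rfl⟩

theorem rho_mem_roots {b : V} (hb : b ∈ gr.roots) (w : W) : gr.ρ w b ∈ gr.roots := by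
  obtain ⟨w', i, rfl⟩ := hb
  exact ⟨w * w', i, (gr.rho_mul_apply ..).symm⟩

theorem neg_mem_roots {b : V} (hb : b ∈ gr.roots) : -b ∈ gr.roots := by
  obtain ⟨w, i, rfl⟩ := hb
  exact ⟨w * cs.simple i, i, by rw [rho_mul_apply, simple_apply_alpha, map_neg]⟩

theorem B_self_of_mem_roots {b : V} (hb : b ∈ gr.roots) : gr.B b b = 1 := by
  obtain ⟨w, i, rfl⟩ := hb
  rw [gr.ρ_isom, gr.norm_one]

theorem ne_zero_of_mem_roots {b : V} (hb : b ∈ gr.roots) : b ≠ 0 := by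
  rintro rfl
  simpa using gr.B_self_of_mem_roots hb

theorem alpha_mem_posRoots (i : I) : gr.α i ∈ gr.posRoots :=
  gr.mem_posRoots_iff.2 ⟨gr.alpha_mem_roots i, gr.alpha_mem_posCone i⟩

theorem mem_posCone_of_mem_posRoots {b : V} (hb : b ∈ gr.posRoots) : b ∈ gr.posCone :=
  (gr.mem_posRoots_iff.1 hb).2

theorem neg_notMem_posRoots {b : V} (hb : b ∈ gr.posRoots) : -b ∉ gr.posRoots := fun hnb =>
  gr.ne_zero_of_mem_roots hb.1 <| gr.eq_zero_of_mem_posCone_of_neg_mem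
    (gr.mem_posCone_of_mem_posRoots hb) (gr.mem_posCone_of_mem_posRoots hnb)

theorem eq_alpha_of_smul_add_eq {i : I} {b v : V} (hb : b ∈ gr.posRoots) (hv : v ∈ gr.posCone)
    {k r : ℝ} (hk : 0 < k) (h : k • b + v = r • gr.α i) : b = gr.α i := by
  obtain ⟨m, hm, hbm⟩ := gr.exists_eq_smul_alpha_of_add_eq
    (PointedCone.smul_mem _ hk.le (gr.mem_posCone_of_mem_posRoots hb)) hv h
  have hb' : b = (m / k) • gr.α i := by
    rw [div_eq_inv_mul, mul_smul, ← hbm, inv_smul_smul₀ hk.ne']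
  have hnorm := gr.B_self_of_mem_roots hb.1
  rw [hb'] at hnorm
  simp only [map_smul, LinearMap.smul_apply, gr.norm_one, smul_eq_mul, mul_one] at hnorm
  have hmk : m / k = 1 := by nlinarith [div_nonneg hm hk.le]
  rw [hb', hmk, one_smul]

theorem eq_alpha_of_neg_simple_apply_mem_posCone {i : I} {b : V} (hb : b ∈ gr.posRoots)
    (h : -gr.ρ (cs.simple i) b ∈ gr.posCone) : b = gr.α i :=
  gr.eq_alpha_of_smul_add_eq hb h one_pos (r := 2 * gr.B (gr.α i) b) (by
    rw [gr.ρ_simple]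
    module)

section Positivity

open CoxeterSystem Polynomial Chebyshev

theorem rho_alternatingWord_alpha (i j : I) (r : ℕ) :
    gr.ρ (cs.wordProd (alternatingWord i j r)) (gr.α i) =
      if Even r then
        (U ℝ r).eval (-gr.B (gr.α i) (gr.α j)) • gr.α i +
          (U ℝ (r - 1)).eval (-gr.B (gr.α i) (gr.α j)) • gr.α j
      else
        (U ℝ (r - 1)).eval (-gr.B (gr.α i) (gr.α j)) • gr.α i +
          (U ℝ r).eval (-gr.B (gr.α i) (gr.α j)) • gr.α j := by
  set c := -gr.B (gr.α i) (gr.α j)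
  have hji : gr.B (gr.α j) (gr.α i) = -c := by rw [gr.symm, neg_neg]
  induction r with
  | zero => simp [alternatingWord, U_neg_one, map_one]
  | succ r ih =>
    have hrec : (U ℝ ((r : ℤ) + 1)).eval c = 2 * c * (U ℝ r).eval c - (U ℝ (r - 1)).eval c := by
      simp [U_add_one]
    rw [alternatingWord_succ', cs.wordProd_cons, rho_mul_apply, ih]
    by_cases hr : Even r
    · simp only [hr, if_true, Nat.even_add_one, not_true_eq_false, if_false, gr.ρ_simple,
        map_add, map_smul, hji, gr.norm_one, smul_eq_mul, Nat.cast_add, Nat.cast_one,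
        add_sub_cancel_right, hrec]
      module
    · simp only [hr, if_false, Nat.even_add_one, not_false_eq_true, if_true, gr.ρ_simple,
        map_add, map_smul, gr.norm_one, smul_eq_mul, Nat.cast_add, Nat.cast_one,
        add_sub_cancel_right, hrec]
      module

theorem exists_rho_alternatingWord_alpha_eq {i j : I} (hij : i ≠ j) {p : ℕ}
    (hred : cs.IsReduced (alternatingWord j i (p + 1))) :
    ∃ a b : ℝ, 0 ≤ a ∧ 0 ≤ b ∧
      gr.ρ (cs.wordProd (alternatingWord i j p)) (gr.α i) = a • gr.α i + b • gr.α j := by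
  have hU : ∀ n : ℤ, -1 ≤ n → n ≤ p → 0 ≤ (U ℝ n).eval (-gr.B (gr.α i) (gr.α j)) := by
    intro n hn hnp
    by_cases hM : M i j = 0
    · exact chebyshevU_eval_nonneg_of_one_le (by linarith [gr.pairing_infinite i j hM]) hn
    have hpM : p + 1 ≤ M i j := by
      by_contra h
      exact cs.not_isReduced_alternatingWord j i (by rwa [M.symmetric]) (by rw [M.symmetric]; omega)
        hred
    rw [gr.pairing_finite i j hM, neg_neg]
    exact chebyshevU_eval_cos_nonneg (two_le_coxeterMatrix hij hM) hn (by omega)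
  rw [gr.rho_alternatingWord_alpha]
  split_ifs
  · exact ⟨_, _, hU _ (by omega) le_rfl, hU _ (by omega) (by omega), rfl⟩
  · exact ⟨_, _, hU _ (by omega) (by omega), hU _ (by omega) le_rfl, rfl⟩

theorem rho_alpha_mem_posCone {w : W} {i : I} (h : ¬cs.IsRightDescent w i) :
    gr.ρ w (gr.α i) ∈ gr.posCone := by
  induction hn : cs.length w using Nat.strong_induction_on generalizing w i with
  | _ n ih =>
    by_cases hw : w = 1
    · rw [hw, map_one]
      exact gr.alpha_mem_posCone i
    obtain ⟨j, hj⟩ := cs.exists_rightDescent_of_ne_one hw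
    obtain ⟨u, p, rfl, hlt, hui, huj, hred⟩ := exists_eq_mul_alternatingWord h hj
    obtain ⟨a, b, ha, hb, hab⟩ :=
      gr.exists_rho_alternatingWord_alpha_eq (by rintro rfl; exact h hj) hred
    rw [rho_mul_apply, hab, map_add, map_smul, map_smul]
    exact add_mem (PointedCone.smul_mem _ ha (ih _ (hn ▸ hlt) hui rfl))
      (PointedCone.smul_mem _ hb (ih _ (hn ▸ hlt) huj rfl))

end Positivity

theorem mem_posRoots_or_neg_mem_posRoots {b : V} (hb : b ∈ gr.roots) :
    b ∈ gr.posRoots ∨ -b ∈ gr.posRoots := by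
  obtain ⟨w, i, rfl⟩ := hb
  by_cases hd : cs.IsRightDescent w i
  · have h := gr.rho_alpha_mem_posCone (cs.isRightDescent_iff_not_isRightDescent_mul.1 hd)
    rw [rho_mul_apply, simple_apply_alpha, map_neg] at h
    exact Or.inr (gr.mem_posRoots_iff.2 ⟨gr.neg_mem_roots ⟨w, i, rfl⟩, h⟩)
  · exact Or.inl (gr.mem_posRoots_iff.2 ⟨⟨w, i, rfl⟩, gr.rho_alpha_mem_posCone hd⟩)

theorem simple_apply_mem_posRoots {i : I} {b : V} (hb : b ∈ gr.posRoots) (hne : b ≠ gr.α i) :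
    gr.ρ (cs.simple i) b ∈ gr.posRoots :=
  (gr.mem_posRoots_or_neg_mem_posRoots (gr.rho_mem_roots hb.1 _)).resolve_right fun h =>
    hne (gr.eq_alpha_of_neg_simple_apply_mem_posCone hb (gr.mem_posCone_of_mem_posRoots h))

theorem simple_apply_injective (i : I) : Function.Injective (gr.ρ (cs.simple i)) :=
  (gr.ρ.apply_bijective _).injective

theorem rfl'_apply {b : V} (hb : b ∈ gr.roots) (v : V) :
    gr.ρ (gr.rfl' b) v = v - (2 * gr.B b v) • b := by
  refine Classical.epsilon_spec (p := fun t => ∀ v, gr.ρ t v = v - (2 * gr.B b v) • b) ?_ v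
  obtain ⟨w, i, rfl⟩ := hb
  refine ⟨w * cs.simple i * w⁻¹, fun v => ?_⟩
  have hB : gr.B (gr.α i) (gr.ρ w⁻¹ v) = gr.B (gr.ρ w (gr.α i)) v := by
    rw [← gr.ρ_isom w, Representation.self_inv_apply]
  rw [rho_mul_apply, rho_mul_apply, gr.ρ_simple, map_sub, map_smul,
    Representation.self_inv_apply, hB]

theorem eq_rfl'_of_forall_apply {b : V} (hb : b ∈ gr.roots) {t : W}
    (ht : ∀ v, gr.ρ t v = v - (2 * gr.B b v) • b) : t = gr.rfl' b :=
  gr.faithful <| LinearMap.ext fun v => by rw [ht, gr.rfl'_apply hb]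

theorem rfl'_alpha (i : I) : gr.rfl' (gr.α i) = cs.simple i :=
  (gr.eq_rfl'_of_forall_apply (gr.alpha_mem_roots i) (gr.ρ_simple i)).symm

theorem rfl'_rho_apply {b : V} (hb : b ∈ gr.roots) (w : W) :
    gr.rfl' (gr.ρ w b) = w * gr.rfl' b * w⁻¹ := by
  refine (gr.eq_rfl'_of_forall_apply (gr.rho_mem_roots hb w) fun v => ?_).symm
  have hB : gr.B b (gr.ρ w⁻¹ v) = gr.B (gr.ρ w b) v := by
    rw [← gr.ρ_isom w, Representation.self_inv_apply]
  rw [rho_mul_apply, rho_mul_apply, gr.rfl'_apply hb, map_sub, map_smul,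
    Representation.self_inv_apply, hB]

theorem rfl'_apply_rfl'_apply {b : V} (hb : b ∈ gr.roots) (v : V) :
    gr.ρ (gr.rfl' b) (gr.ρ (gr.rfl' b) v) = v := by
  simp only [gr.rfl'_apply hb, map_sub, map_smul, smul_eq_mul, gr.B_self_of_mem_roots hb]
  module

theorem rfl'_inv {b : V} (hb : b ∈ gr.roots) : (gr.rfl' b)⁻¹ = gr.rfl' b :=
  inv_eq_of_mul_eq_one_right <| gr.faithful <| LinearMap.ext fun v => by
    rw [map_mul, map_one, Module.End.mul_apply, gr.rfl'_apply_rfl'_apply hb]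
    rfl

theorem B_rfl'_apply_left {b : V} (hb : b ∈ gr.roots) (a : V) :
    gr.B (gr.ρ (gr.rfl' b) a) b = -gr.B a b := by
  rw [gr.rfl'_apply hb, map_sub, map_smul, LinearMap.sub_apply, LinearMap.smul_apply,
    gr.B_self_of_mem_roots hb, gr.symm b a, smul_eq_mul]
  ring

theorem mem_invSet_iff {w : W} {v : V} :
    v ∈ gr.invSet w ↔ v ∈ gr.posRoots ∧ -gr.ρ w⁻¹ v ∈ gr.posRoots :=
  Iff.rfl

theorem mem_invSet_rfl'_iff {b : V} (hb : b ∈ gr.roots) {v : V} :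
    v ∈ gr.invSet (gr.rfl' b) ↔ v ∈ gr.posRoots ∧ -gr.ρ (gr.rfl' b) v ∈ gr.posRoots := by
  rw [mem_invSet_iff, gr.rfl'_inv hb]

theorem invSet_simple (i : I) : gr.invSet (cs.simple i) = {gr.α i} := by
  ext v
  rw [mem_invSet_iff, CoxeterSystem.inv_simple, Set.mem_singleton_iff]
  refine ⟨fun h => gr.eq_alpha_of_neg_simple_apply_mem_posCone h.1
    (gr.mem_posCone_of_mem_posRoots h.2), ?_⟩
  rintro rfl
  rw [simple_apply_alpha, neg_neg]
  exact ⟨gr.alpha_mem_posRoots i, gr.alpha_mem_posRoots i⟩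

theorem invSet_simple_mul_subset (i : I) (w : W) :
    gr.invSet (cs.simple i * w) ⊆ insert (gr.α i) (gr.ρ (cs.simple i) '' gr.invSet w) := by
  intro v hv
  rw [mem_invSet_iff, mul_inv_rev, CoxeterSystem.inv_simple, rho_mul_apply] at hv
  by_cases hvi : v = gr.α i
  · exact Or.inl hvi
  exact Or.inr ⟨_, ⟨gr.simple_apply_mem_posRoots hv.1 hvi, hv.2⟩,
    gr.simple_apply_simple_apply i v⟩

theorem invSet_finite (w : W) : (gr.invSet w).Finite := by
  obtain ⟨l, rfl⟩ := cs.wordProd_surjective w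
  induction l with
  | nil =>
    refine Set.finite_empty.subset fun v hv => ?_
    rw [cs.wordProd_nil, mem_invSet_iff, inv_one, map_one] at hv
    exact gr.neg_notMem_posRoots hv.1 hv.2
  | cons i l ih =>
    rw [cs.wordProd_cons]
    exact ((ih.image _).insert _).subset (gr.invSet_simple_mul_subset i _)

theorem simple_apply_mem_invSet_conj {w : W} {i : I} {a : V} (ha : a ∈ gr.invSet w)
    (hai : a ≠ gr.α i) (hwa : gr.ρ w⁻¹ a ≠ -gr.α i) :
    gr.ρ (cs.simple i) a ∈ gr.invSet (cs.simple i * w * cs.simple i) := by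
  refine ⟨gr.simple_apply_mem_posRoots ha.1 hai, ?_⟩
  have hinv : gr.ρ (cs.simple i * w * cs.simple i)⁻¹ (gr.ρ (cs.simple i) a) =
      gr.ρ (cs.simple i) (gr.ρ w⁻¹ a) := by
    rw [mul_inv_rev, mul_inv_rev, CoxeterSystem.inv_simple, rho_mul_apply, rho_mul_apply,
      simple_apply_simple_apply]
  rw [Set.mem_neg, hinv, ← map_neg]
  exact gr.simple_apply_mem_posRoots ha.2 fun h => hwa (neg_eq_iff_eq_neg.1 h)

section Counting

variable (X : Set ℝ)

def xInvSet (b : V) : Set V := {a | a ∈ gr.invSet (gr.rfl' b) ∧ gr.B a b ∈ X}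

theorem xInvSet_finite (b : V) : (gr.xInvSet X b).Finite :=
  (gr.invSet_finite _).subset fun _ ha => ha.1

/-- The roots `α_i, ±s_β α_i`, outside of which `s_i` carries `N(s_β)` onto `N(s_{s_i β})`. -/
def exceptionalRoots (i : I) (b : V) : Set V :=
  {gr.α i, gr.ρ (gr.rfl' b) (gr.α i), -gr.ρ (gr.rfl' b) (gr.α i)}

theorem mapsTo_xInvSet_diff_exceptionalRoots (i : I) {b : V} (hb : b ∈ gr.roots) :
    Set.MapsTo (gr.ρ (cs.simple i)) (gr.xInvSet X b \ gr.exceptionalRoots i b)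
      (gr.xInvSet X (gr.ρ (cs.simple i) b) \ gr.exceptionalRoots i (gr.ρ (cs.simple i) b)) := by
  rintro a ⟨⟨haN, haX⟩, haE⟩
  simp only [exceptionalRoots, Set.mem_insert_iff, Set.mem_singleton_iff, not_or] at haE
  obtain ⟨hai, hat, hant⟩ := haE
  have hconj : gr.rfl' (gr.ρ (cs.simple i) b) = cs.simple i * gr.rfl' b * cs.simple i := by
    rw [gr.rfl'_rho_apply hb, CoxeterSystem.inv_simple]
  have hα : gr.ρ (gr.rfl' (gr.ρ (cs.simple i) b)) (gr.α i) =
      gr.ρ (cs.simple i) (-gr.ρ (gr.rfl' b) (gr.α i)) := by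
    rw [hconj, rho_mul_apply, rho_mul_apply, simple_apply_alpha, map_neg]
  have hta : gr.ρ (gr.rfl' b)⁻¹ a ≠ -gr.α i := by
    rw [gr.rfl'_inv hb]
    intro h
    exact hant ((gr.rfl'_apply_rfl'_apply hb a).symm.trans (by rw [h, map_neg]))
  refine ⟨⟨hconj ▸ gr.simple_apply_mem_invSet_conj haN hai hta, by rwa [gr.ρ_isom]⟩, ?_⟩
  simp only [exceptionalRoots, Set.mem_insert_iff, Set.mem_singleton_iff, not_or]
  refine ⟨fun h => ?_, fun h => ?_, fun h => ?_⟩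
  · refine gr.neg_notMem_posRoots (gr.alpha_mem_posRoots i) ?_
    rw [← simple_apply_alpha, ← h, simple_apply_simple_apply]
    exact haN.1
  · exact hant (gr.simple_apply_injective i (h.trans hα))
  · rw [hα, ← map_neg, neg_neg] at h
    exact hat (gr.simple_apply_injective i h)

theorem ncard_xInvSet_diff_exceptionalRoots (i : I) {b : V} (hb : b ∈ gr.roots) :
    (gr.xInvSet X b \ gr.exceptionalRoots i b).ncard =
      (gr.xInvSet X (gr.ρ (cs.simple i) b) \
        gr.exceptionalRoots i (gr.ρ (cs.simple i) b)).ncard := by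
  have hle : ∀ {b}, b ∈ gr.roots → (gr.xInvSet X b \ gr.exceptionalRoots i b).ncard ≤
      (gr.xInvSet X (gr.ρ (cs.simple i) b) \
        gr.exceptionalRoots i (gr.ρ (cs.simple i) b)).ncard := fun hb =>
    Set.ncard_le_ncard_of_injOn _ (gr.mapsTo_xInvSet_diff_exceptionalRoots X i hb)
      (gr.simple_apply_injective i).injOn ((gr.xInvSet_finite X _).subset Set.sdiff_subset)
  refine (hle hb).antisymm ?_
  simpa only [simple_apply_simple_apply] using hle (gr.rho_mem_roots hb (cs.simple i))

theorem neg_rfl'_apply_alpha_mem_posRoots {i : I} {b : V} (hb : b ∈ gr.posRoots)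
    (hbi : b ≠ gr.α i) (hc : 0 < gr.B (gr.α i) b) :
    -gr.ρ (gr.rfl' b) (gr.α i) ∈ gr.posRoots := by
  refine (gr.mem_posRoots_or_neg_mem_posRoots
    (gr.neg_mem_roots (gr.rho_mem_roots (gr.alpha_mem_roots i) _))).resolve_right fun h => hbi ?_
  rw [neg_neg] at h
  refine gr.eq_alpha_of_smul_add_eq hb (gr.mem_posCone_of_mem_posRoots h)
    (by positivity : 0 < 2 * gr.B (gr.α i) b) (r := 1) ?_
  rw [gr.rfl'_apply hb.1, gr.symm b]
  module

theorem neg_rfl'_apply_alpha_ne {i : I} {b : V} (hb : b ∈ gr.posRoots)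
    (hbi : b ≠ gr.α i) (hc : 0 < gr.B (gr.α i) b) :
    -gr.ρ (gr.rfl' b) (gr.α i) ≠ gr.α i := fun h => hbi <|
  gr.eq_alpha_of_smul_add_eq hb (zero_mem _) (by positivity : 0 < 2 * gr.B (gr.α i) b)
    (r := 2) (by
      rw [gr.rfl'_apply hb.1, gr.symm b] at h
      linear_combination (norm := module) h)

theorem ncard_xInvSet_inter_exceptionalRoots (hX : X ⊆ Set.Ioi 0) {i : I} {b : V}
    (hb : b ∈ gr.posRoots) (hbi : b ≠ gr.α i) :
    (gr.xInvSet X b ∩ gr.exceptionalRoots i b).ncard = if gr.B (gr.α i) b ∈ X then 2 else 0 := by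
  have hBt : gr.B (-gr.ρ (gr.rfl' b) (gr.α i)) b = gr.B (gr.α i) b := by
    rw [map_neg, LinearMap.neg_apply, gr.B_rfl'_apply_left hb.1, neg_neg]
  have htα : gr.ρ (gr.rfl' b) (gr.α i) ∉ gr.invSet (gr.rfl' b) := fun h =>
    gr.neg_notMem_posRoots (gr.alpha_mem_posRoots i)
      (by simpa only [gr.rfl'_apply_rfl'_apply hb.1] using ((gr.mem_invSet_rfl'_iff hb.1).1 h).2)
  split_ifs with hc
  · have hpos := gr.neg_rfl'_apply_alpha_mem_posRoots hb hbi (hX hc)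
    convert Set.ncard_pair (gr.neg_rfl'_apply_alpha_ne hb hbi (hX hc)).symm
    ext a
    simp only [xInvSet, exceptionalRoots, Set.mem_inter_iff, Set.mem_ofPred_eq,
      Set.mem_insert_iff, Set.mem_singleton_iff]
    constructor
    · rintro ⟨⟨haN, -⟩, rfl | rfl | rfl⟩
      · exact Or.inl rfl
      · exact absurd haN htα
      · exact Or.inr rfl
    · rintro (rfl | rfl)
      · exact ⟨⟨(gr.mem_invSet_rfl'_iff hb.1).2 ⟨gr.alpha_mem_posRoots i, hpos⟩, hc⟩, Or.inl rfl⟩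
      · refine ⟨⟨(gr.mem_invSet_rfl'_iff hb.1).2 ⟨hpos, ?_⟩, hBt ▸ hc⟩, Or.inr (Or.inr rfl)⟩
        rw [map_neg, gr.rfl'_apply_rfl'_apply hb.1, neg_neg]
        exact gr.alpha_mem_posRoots i
  · convert Set.ncard_empty V
    refine Set.eq_empty_of_forall_notMem ?_
    rintro a ⟨⟨haN, haX⟩, rfl | rfl | rfl⟩
    · exact hc haX
    · exact htα haN
    · exact hc (hBt ▸ haX)

theorem dXpos_simple_apply_add (hX : X ⊆ Set.Ioi 0) {i : I} {b : V} (hb : b ∈ gr.posRoots)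
    (hbi : b ≠ gr.α i) :
    (gr.dXpos X (gr.ρ (cs.simple i) b) : ℤ) + (if gr.B (gr.α i) b ∈ X then 2 else 0) =
      gr.dXpos X b + (if -gr.B (gr.α i) b ∈ X then 2 else 0) := by
  have hb' := gr.simple_apply_mem_posRoots hb hbi
  have hb'i : gr.ρ (cs.simple i) b ≠ gr.α i := fun h =>
    gr.neg_notMem_posRoots (gr.alpha_mem_posRoots i)
      (by rwa [← simple_apply_alpha, ← h, simple_apply_simple_apply])
  have e := Set.ncard_inter_add_ncard_sdiff_eq_ncard (gr.xInvSet X b)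
    (gr.exceptionalRoots i b) (gr.xInvSet_finite X b)
  have e' := Set.ncard_inter_add_ncard_sdiff_eq_ncard (gr.xInvSet X (gr.ρ (cs.simple i) b))
    (gr.exceptionalRoots i (gr.ρ (cs.simple i) b)) (gr.xInvSet_finite X _)
  rw [gr.ncard_xInvSet_inter_exceptionalRoots X hX hb hbi,
    gr.ncard_xInvSet_diff_exceptionalRoots X i hb.1] at e
  rw [gr.ncard_xInvSet_inter_exceptionalRoots X hX hb' hb'i, B_alpha_simple_apply] at e'
  rw [dXpos, dXpos, ← xInvSet, ← xInvSet, ← e, ← e']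
  split_ifs <;> push_cast <;> ring

theorem dXpos_alpha (i : I) : gr.dXpos X (gr.α i) = if (1 : ℝ) ∈ X then 1 else 0 := by
  rw [dXpos, gr.rfl'_alpha, invSet_simple]
  split_ifs with h
  · convert Set.ncard_singleton (gr.α i)
    ext a
    simp only [Set.mem_ofPred_eq, Set.mem_singleton_iff, and_iff_left_iff_imp]
    rintro rfl
    rwa [gr.norm_one]
  · convert Set.ncard_empty V
    refine Set.eq_empty_of_forall_notMem ?_
    rintro a ⟨rfl, ha⟩
    exact h (gr.norm_one i ▸ ha)

theorem dX_of_mem_posRoots {b : V} (hb : b ∈ gr.posRoots) : gr.dX X b = gr.dXpos X b :=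
  if_pos hb

theorem dX_neg {b : V} (hb : b ∈ gr.roots) : gr.dX X (-b) = -gr.dX X b := by
  rcases gr.mem_posRoots_or_neg_mem_posRoots hb with h | h
  · rw [dX, dX, if_neg (gr.neg_notMem_posRoots h), if_pos h, neg_neg]
  · rw [dX, dX, if_pos h, if_neg fun h' => gr.neg_notMem_posRoots h' h, neg_neg]

theorem dX_simple_apply_add_of_mem_posRoots (hX : X ⊆ Set.Ioi 0) (i : I) {b : V}
    (hb : b ∈ gr.posRoots) :
    gr.dX X (gr.ρ (cs.simple i) b) + (if gr.B (gr.α i) b ∈ X then 2 else 0) =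
      gr.dX X b + (if -gr.B (gr.α i) b ∈ X then 2 else 0) := by
  by_cases hbi : b = gr.α i
  · subst hbi
    have h1 : (-1 : ℝ) ∉ X := fun h => by linarith [Set.mem_Ioi.1 (hX h)]
    rw [simple_apply_alpha, gr.dX_neg X (gr.alpha_mem_roots i),
      gr.dX_of_mem_posRoots X (gr.alpha_mem_posRoots i), dXpos_alpha, gr.norm_one, if_neg h1]
    split_ifs <;> norm_num
  · rw [gr.dX_of_mem_posRoots X hb, gr.dX_of_mem_posRoots X (gr.simple_apply_mem_posRoots hb hbi)]
    exact gr.dXpos_simple_apply_add X hX hb hbi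

theorem dX_simple_apply_add (hX : X ⊆ Set.Ioi 0) (i : I) {b : V} (hb : b ∈ gr.roots) :
    gr.dX X (gr.ρ (cs.simple i) b) + (if gr.B (gr.α i) b ∈ X then 2 else 0) =
      gr.dX X b + (if -gr.B (gr.α i) b ∈ X then 2 else 0) := by
  rcases gr.mem_posRoots_or_neg_mem_posRoots hb with h | h
  · exact gr.dX_simple_apply_add_of_mem_posRoots X hX i h
  · have := gr.dX_simple_apply_add_of_mem_posRoots X hX i h
    rw [map_neg, gr.dX_neg X (gr.rho_mem_roots hb _), gr.dX_neg X hb, map_neg, neg_neg] at this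
    linarith

end Counting

end GeomRep

/-- Recursion for the `X`-length functions `d_X` on the root system under simple
reflections. -/
theorem dX_simple_recursion (gr : GeomRep cs V) (X : Set ℝ) (hX : X ⊆ Set.Ioi 0)
    (i : I) (b : V) (hb : b ∈ gr.roots) :
    (gr.B (gr.α i) b ∈ X → gr.dX X (gr.ρ (cs.simple i) b) = gr.dX X b - 2) ∧
      (gr.B (gr.α i) b ∉ X ∪ -X → gr.dX X (gr.ρ (cs.simple i) b) = gr.dX X b) ∧
      (gr.B (gr.α i) b ∈ -X → gr.dX X (gr.ρ (cs.simple i) b) = gr.dX X b + 2) := by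
  have key := gr.dX_simple_apply_add X hX i hb
  have hsep : ∀ {x : ℝ}, x ∈ X → -x ∉ X := fun hx hnx => by
    linarith [Set.mem_Ioi.1 (hX hx), Set.mem_Ioi.1 (hX hnx)]
  refine ⟨fun h => ?_, fun h => ?_, fun h => ?_⟩
  · rw [if_pos h, if_neg (hsep h)] at key
    omega
  · rw [Set.mem_union, Set.mem_neg, not_or] at h
    rw [if_neg h.1, if_neg h.2] at key
    omega
  · rw [Set.mem_neg] at h
    rw [if_neg fun hc => hsep hc h, if_pos h] at key
    omega

end CoxGar
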